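/- Let U, V be reflexive Banach spaces and b : U × V → ℝ a bounded bilinear form such that the operator B : U → V', u ↦ b(u,·), is bounded and bijective. Suppose ‖·‖_w is a seminorm on U and C > 0 satisfies ‖u‖_w ≤ C · sup_{0 ≠ v ∈ V} b(u,v)/‖v‖_V for all u ∈ U. Then for any subspace U_h ⊆ U on which the Petrov–Galerkin solution u_h with optimal test functions exists, the quasi-optimality estimate ‖u − u_h‖_w ≤ C · inf_{u'_h ∈ U_h} sup_{0 ≠ v ∈ V} b(u − u'_h, v)/‖v‖_V holds. -/

import Mathlib

open scoped RealInnerProductSpace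

/-!
Since `⟪Θ x, v⟫ = b x v`, the supremum `sup_{v ≠ 0} b(x, v) / ‖v‖` is exactly `‖Θ x‖`
(Cauchy–Schwarz, with equality at `v = Θ x`), so the optimal trial norm is the energy norm
`x ↦ ‖Θ x‖`. Galerkin orthogonality `b(u - u_h, Θ w_h) = 0` on `U_h` makes `u_h` the
`Θ`-orthogonal projection of `u` onto `U_h`, so `u_h` attains the infimum of `‖Θ (u - w_h)‖`
over `U_h`; the hypothesis on `‖·‖_w` applied to `u - u_h` then gives the estimate.
-/

theorem iSup_inner_div_norm_eq_norm {V : Type*} [NormedAddCommGroup V] [InnerProductSpace ℝ V]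
    (x : V) : ⨆ v : {v : V // v ≠ 0}, ⟪x, v⟫ / ‖(v : V)‖ = ‖x‖ := by
  have hle : ∀ v : {v : V // v ≠ 0}, ⟪x, v⟫ / ‖(v : V)‖ ≤ ‖x‖ := fun ⟨v, hv⟩ =>
    (div_le_iff₀ (norm_pos_iff.mpr hv)).mpr (real_inner_le_norm x v)
  refine le_antisymm (Real.iSup_le hle (norm_nonneg x)) ?_
  rcases eq_or_ne x 0 with rfl | hx
  · exact norm_zero (E := V) ▸ Real.iSup_nonneg fun v => by simp
  · refine le_ciSup_of_le ⟨‖x‖, Set.forall_mem_range.mpr hle⟩ ⟨x, hx⟩ (le_of_eq ?_)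
    rw [real_inner_self_eq_norm_mul_norm, mul_div_cancel_right₀ _ (norm_ne_zero_iff.mpr hx)]

section OptimalTestFunctions

variable {U V : Type*} [NormedAddCommGroup U] [NormedSpace ℝ U]
  [NormedAddCommGroup V] [InnerProductSpace ℝ V]
  {b : U →L[ℝ] V →L[ℝ] ℝ} {Θ : U → V}

theorem iSup_div_norm_eq_norm_of_inner_eq (hΘ : ∀ (u : U) (v : V), ⟪Θ u, v⟫ = b u v) (x : U) :
    ⨆ v : {v : V // v ≠ 0}, b x v / ‖(v : V)‖ = ‖Θ x‖ := by
  simp_rw [← hΘ]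
  exact iSup_inner_div_norm_eq_norm (Θ x)

theorem norm_sub_le_of_galerkin_orthogonal (hΘ : ∀ (u : U) (v : V), ⟪Θ u, v⟫ = b u v)
    {Uh : Submodule ℝ U} {u uh : U} (huh : uh ∈ Uh)
    (horth : ∀ wh ∈ Uh, b (u - uh) (Θ wh) = 0) {wh : U} (hwh : wh ∈ Uh) :
    ‖Θ (u - uh)‖ ≤ ‖Θ (u - wh)‖ := by
  have hcross : b (uh - wh) (Θ (u - uh)) = 0 := by
    rw [← hΘ, real_inner_comm, hΘ]
    exact horth _ (Uh.sub_mem huh hwh)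
  have hsq : ⟪Θ (u - wh), Θ (u - uh)⟫ = ‖Θ (u - uh)‖ ^ 2 := by
    have hsplit : u - wh = (u - uh) + (uh - wh) := by abel
    rw [hΘ, hsplit, map_add, add_apply, hcross, add_zero, ← hΘ,
      real_inner_self_eq_norm_sq]
  have hcs : ‖Θ (u - uh)‖ ^ 2 ≤ ‖Θ (u - wh)‖ * ‖Θ (u - uh)‖ :=
    hsq ▸ real_inner_le_norm _ _
  nlinarith [norm_nonneg (Θ (u - uh)), norm_nonneg (Θ (u - wh))]

theorem iInf_norm_sub_eq_of_galerkin_orthogonal (hΘ : ∀ (u : U) (v : V), ⟪Θ u, v⟫ = b u v)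
    {Uh : Submodule ℝ U} {u uh : U} (huh : uh ∈ Uh)
    (horth : ∀ wh ∈ Uh, b (u - uh) (Θ wh) = 0) :
    ⨅ wh : Uh, ‖Θ (u - (wh : U))‖ = ‖Θ (u - uh)‖ :=
  le_antisymm
    (ciInf_le (f := fun wh : Uh => ‖Θ (u - (wh : U))‖)
      ⟨0, Set.forall_mem_range.mpr fun _ => norm_nonneg _⟩ ⟨uh, huh⟩)
    (le_ciInf fun wh => norm_sub_le_of_galerkin_orthogonal hΘ huh horth wh.2)

end OptimalTestFunctions

theorem statement10_general
    {U V : Type*}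
    [NormedAddCommGroup U] [NormedSpace ℝ U]
    [NormedAddCommGroup V] [InnerProductSpace ℝ V]
    (b : U →L[ℝ] V →L[ℝ] ℝ)
    (w : Seminorm ℝ U) (C : ℝ)
    (hw : ∀ u : U, w u ≤ C * ⨆ v : {v : V // v ≠ 0}, b u v / ‖(v : V)‖)
    -- trial-to-test operator
    (Θ : U → V) (hΘ : ∀ (u : U) (v : V), ⟪Θ u, v⟫ = b u v)
    (Uh : Submodule ℝ U)
    (ℓ : V →L[ℝ] ℝ)
    -- exact solution
    (u : U) (hu : ∀ v : V, b u v = ℓ v)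
    -- the Petrov–Galerkin solution with optimal test functions
    (uh : U) (huh : uh ∈ Uh) (huhsol : ∀ wh ∈ Uh, b uh (Θ wh) = ℓ (Θ wh)) :
    w (u - uh) ≤
      C * ⨅ wh : Uh, ⨆ v : {v : V // v ≠ 0}, b (u - (wh : U)) v / ‖(v : V)‖ := by
  have horth : ∀ wh ∈ Uh, b (u - uh) (Θ wh) = 0 := fun wh hwh => by
    rw [map_sub, sub_apply, hu, huhsol wh hwh, sub_self]
  calc w (u - uh) ≤ C * ⨆ v : {v : V // v ≠ 0}, b (u - uh) v / ‖(v : V)‖ := hw _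
    _ = C * ⨅ wh : Uh, ⨆ v : {v : V // v ≠ 0}, b (u - (wh : U)) v / ‖(v : V)‖ := by
      simp_rw [iSup_div_norm_eq_norm_of_inner_eq hΘ,
        iInf_norm_sub_eq_of_galerkin_orthogonal hΘ huh horth]

/-- Quasi-optimality of the DPG (Petrov–Galerkin with optimal test
functions) solution in any seminorm `‖·‖_w` dominated by the optimal trial norm:
if `‖u‖_w ≤ C · sup_{0≠v} b(u,v)/‖v‖_V` for all `u`, then
`‖u − u_h‖_w ≤ C · inf_{u'_h ∈ U_h} sup_{0≠v} b(u − u'_h, v)/‖v‖_V`. -/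
theorem statement10
    {U V : Type*}
    [NormedAddCommGroup U] [NormedSpace ℝ U] [CompleteSpace U]
    [NormedAddCommGroup V] [InnerProductSpace ℝ V] [CompleteSpace V]
    (hUrefl : Function.Surjective (NormedSpace.inclusionInDoubleDual ℝ U))
    (b : U →L[ℝ] V →L[ℝ] ℝ)
    (hb : Function.Bijective fun u : U => b u)
    (w : Seminorm ℝ U) (C : ℝ) (hC : 0 < C)
    (hw : ∀ u : U, w u ≤ C * ⨆ v : {v : V // v ≠ 0}, b u v / ‖(v : V)‖)
    -- trial-to-test operator
    (Θ : U → V) (hΘ : ∀ (u : U) (v : V), ⟪Θ u, v⟫ = b u v)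
    (Uh : Submodule ℝ U)
    (ℓ : V →L[ℝ] ℝ)
    -- exact solution
    (u : U) (hu : ∀ v : V, b u v = ℓ v)
    -- the Petrov–Galerkin solution with optimal test functions
    (uh : U) (huh : uh ∈ Uh) (huhsol : ∀ wh ∈ Uh, b uh (Θ wh) = ℓ (Θ wh)) :
    w (u - uh) ≤
      C * ⨅ wh : Uh, ⨆ v : {v : V // v ≠ 0}, b (u - (wh : U)) v / ‖(v : V)‖ :=
  statement10_general b w C hw Θ hΘ Uh ℓ u hu uh huh huhsol
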